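/- Let D be a linearly connected digraph with strong components D_1, ..., D_η. If two distinct vertices x and y of D have a common m-step prey belonging to a nontrivial strong component for some positive integer m, then there exists a positive integer N such that x and y are adjacent in C(D^{m'}) for every integer m' ≥ N. -/

import Mathlib

/-!
In a nontrivial strong component every vertex reaches some other vertex, so it has an
out-neighbour inside the component. Hence walks of every length start at the common prey `z`,
and appending one of length `m' - m` to both walks of length `m` ending at `z` gives a common
`m'`-step prey for every `m' ≥ m`.
-/

/-- A digraph: a finite vertex type with an irreflexive arc relation (no loops). -/
structure Digraph' (V : Type*) where
  Adj : V → V → Prop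
  irrefl : ∀ v, ¬ Adj v v

namespace Digraph'

variable {V : Type*}

/-- There is a directed walk of length `m` from `x` to `y` in `D`;
i.e. `y` is an `m`-step prey of `x`. -/
def HasWalk (D : Digraph' V) (m : ℕ) (x y : V) : Prop :=
  ∃ f : ℕ → V, f 0 = x ∧ f m = y ∧ ∀ t, t < m → D.Adj (f t) (f (t + 1))

/-- There is a directed walk of length `m` from `x` to `y` staying inside `S`. -/
def HasWalkIn (D : Digraph' V) (S : Set V) (m : ℕ) (x y : V) : Prop :=
  ∃ f : ℕ → V, f 0 = x ∧ f m = y ∧ (∀ t, t ≤ m → f t ∈ S) ∧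
    ∀ t, t < m → D.Adj (f t) (f (t + 1))

/-- The `m`-step competition graph `C(D^m)` of `D`. -/
def compGraph (D : Digraph' V) (m : ℕ) : SimpleGraph V where
  Adj u v := u ≠ v ∧ ∃ z, D.HasWalk m u z ∧ D.HasWalk m v z
  symm := by
    constructor
    rintro u v ⟨hne, z, h1, h2⟩
    exact ⟨hne.symm, z, h2, h1⟩
  loopless := ⟨fun v h => h.1 rfl⟩

/-- The sequence `{C(D^m)}_{m ≥ 1}` converges. -/
def CompConverges (D : Digraph' V) : Prop :=
  ∃ N : ℕ, 1 ≤ N ∧ ∀ m, N ≤ m → D.compGraph m = D.compGraph N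

/-- The sequence `{C(D^m)}_{m ≥ 1}` converges to the graph `G`. -/
def CompConvergesTo (D : Digraph' V) (G : SimpleGraph V) : Prop :=
  ∃ N : ℕ, 1 ≤ N ∧ ∀ m, N ≤ m → D.compGraph m = G

/-- `D` is linearly connected with strong components `Vset 1, …, Vset η`. -/
structure IsLinConn (D : Digraph' V) (η : ℕ) (Vset : ℕ → Set V) : Prop where
  nonempty : ∀ i, 1 ≤ i → i ≤ η → (Vset i).Nonempty
  cover : ∀ v : V, ∃ i, 1 ≤ i ∧ i ≤ η ∧ v ∈ Vset i
  disjoint' : ∀ i j, 1 ≤ i → i ≤ η → 1 ≤ j → j ≤ η →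
      ∀ v : V, v ∈ Vset i → v ∈ Vset j → i = j
  strong : ∀ i, 1 ≤ i → i ≤ η → ∀ x ∈ Vset i, ∀ y ∈ Vset i,
      ∃ m, D.HasWalkIn (Vset i) m x y
  arcs : ∀ x y : V, D.Adj x y → ∃ i, 1 ≤ i ∧
      ((i ≤ η ∧ x ∈ Vset i ∧ y ∈ Vset i) ∨
       (i + 1 ≤ η ∧ x ∈ Vset i ∧ y ∈ Vset (i + 1)))
  linked : ∀ i, 1 ≤ i → i + 1 ≤ η → ∃ x ∈ Vset i, ∃ y ∈ Vset (i + 1), D.Adj x y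

/-- A component with vertex set `S` is trivial if `S` is a singleton. -/
def IsTrivialComp (S : Set V) : Prop := ∃ v : V, S = {v}

/-- `κ` is the index of imprimitivity of the (strong) component with vertex set `S`:
the gcd of the lengths of all closed directed walks inside `S`. -/
def IsImprimIndex (D : Digraph' V) (S : Set V) (κ : ℕ) : Prop :=
  (∀ (x : V) (m : ℕ), x ∈ S → 0 < m → D.HasWalkIn S m x x → κ ∣ m) ∧
  ∀ d : ℕ, (∀ (x : V) (m : ℕ), x ∈ S → 0 < m → D.HasWalkIn S m x x → d ∣ m) → d ∣ κ

/-- `u` is an imprimitivity labelling on `S`: along any arc inside `S` the label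
increases by one.  Its fibers are the sets of imprimitivity. -/
def IsImprimLabelling (D : Digraph' V) (S : Set V) {κ : ℕ} (u : V → ZMod κ) : Prop :=
  ∀ x ∈ S, ∀ y ∈ S, D.Adj x y → u y = u x + 1

/-- `(k, l) ∈ I(D_{p,p+1})`: some arc goes from a vertex of `U_k^{(p)}` to a vertex of
`U_l^{(p+1)}`. -/
def InI (D : Digraph' V) (Vset : ℕ → Set V) {κ : ℕ → ℕ}
    (u : ∀ i : ℕ, V → ZMod (κ i)) (p : ℕ) (k : ZMod (κ p)) (l : ZMod (κ (p + 1))) : Prop :=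
  ∃ x ∈ Vset p, ∃ y ∈ Vset (p + 1), D.Adj x y ∧ u p x = k ∧ u (p + 1) y = l

/-- `(i, j)` is an edge of the bipartite graph `B_{p,p+1}`. -/
def BAdj (D : Digraph' V) (Vset : ℕ → Set V) {κ : ℕ → ℕ}
    (u : ∀ i : ℕ, V → ZMod (κ i)) (p : ℕ) (i : ZMod (κ p)) (j : ZMod (κ (p + 1))) : Prop :=
  ∃ (k : ZMod (κ p)) (l : ZMod (κ (p + 1))) (a : ℤ),
    InI D Vset u p k l ∧ i = k + 1 + (a : ZMod (κ p)) ∧ j = l + (a : ZMod (κ (p + 1)))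

/-- The competition skeleton graph (CS-graph) `PT_D^{(η)}`: vertices are pairs `⟨r, i⟩`
with `i ∈ ZMod (κ r)` (only `1 ≤ r ≤ η` carries edges); `⟨p, i⟩` and `⟨p+1, j⟩` are
adjacent exactly when `i` and `j` are adjacent in `B_{p,p+1}`. -/
def csGraph (D : Digraph' V) (Vset : ℕ → Set V) {κ : ℕ → ℕ}
    (u : ∀ i : ℕ, V → ZMod (κ i)) (η : ℕ) : SimpleGraph ((r : ℕ) × ZMod (κ r)) where
  Adj a b := ∃ p, 1 ≤ p ∧ p + 1 ≤ η ∧ ∃ (i : ZMod (κ p)) (j : ZMod (κ (p + 1))),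
    BAdj D Vset u p i j ∧
    ((a = ⟨p, i⟩ ∧ b = ⟨p + 1, j⟩) ∨ (a = ⟨p + 1, j⟩ ∧ b = ⟨p, i⟩))
  symm := by
    constructor
    rintro a b ⟨p, h1, h2, i, j, hB, hab⟩
    exact ⟨p, h1, h2, i, j, hB,
      hab.elim (fun h => Or.inr ⟨h.2, h.1⟩) (fun h => Or.inl ⟨h.2, h.1⟩)⟩
  loopless := by
    constructor
    rintro a ⟨p, _, _, i, j, _, hab⟩
    rcases hab with ⟨ha, hb⟩ | ⟨ha, hb⟩
    · have h : p = p + 1 := congrArg Sigma.fst (ha.symm.trans hb)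
      omega
    · have h : p + 1 = p := congrArg Sigma.fst (ha.symm.trans hb)
      omega

end Digraph'

namespace Digraph'

variable {V : Type*} {D : Digraph' V}

theorem hasWalk_one_of_adj {x y : V} (h : D.Adj x y) : D.HasWalk 1 x y :=
  ⟨fun t => if t = 0 then x else y, rfl, rfl, fun t ht => by simpa [Nat.lt_one_iff.mp ht] using h⟩

theorem hasWalk_zero (x : V) : D.HasWalk 0 x x :=
  ⟨fun _ => x, rfl, rfl, fun _ ht => absurd ht (Nat.not_lt_zero _)⟩

theorem HasWalk.append {m n : ℕ} {x y w : V} (hxy : D.HasWalk m x y) (hyw : D.HasWalk n y w) :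
    D.HasWalk (m + n) x w := by
  obtain ⟨f, hf0, hfm, hf⟩ := hxy
  obtain ⟨g, hg0, hgn, hg⟩ := hyw
  refine ⟨fun t => if t < m then f t else g (t - m), ?_, ?_, fun t ht => ?_⟩
  · rcases Nat.eq_zero_or_pos m with rfl | hm
    · simp only [lt_self_iff_false, if_false, Nat.sub_self, hg0, ← hfm, hf0]
    · simp only [if_pos hm, hf0]
  · simp only [if_neg (Nat.not_lt.mpr (Nat.le_add_right m n)), Nat.add_sub_cancel_left, hgn]
  · rcases lt_trichotomy (t + 1) m with h | h | h
    · simpa only [if_pos h, if_pos (by omega : t < m)] using hf t (by omega)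
    · simpa only [if_pos (by omega : t < m), h, lt_self_iff_false, if_false, Nat.sub_self, hg0,
        ← hfm] using hf t (by omega)
    · simpa only [if_neg (by omega : ¬ t < m), if_neg (by omega : ¬ t + 1 < m),
        (by omega : t + 1 - m = t - m + 1)] using hg (t - m) (by omega)

theorem exists_hasWalk_of_forall_exists_adj {S : Set V} (hS : ∀ v ∈ S, ∃ w ∈ S, D.Adj v w)
    {v : V} (hv : v ∈ S) : ∀ n, ∃ w ∈ S, D.HasWalk n v w
  | 0 => ⟨v, hv, hasWalk_zero v⟩
  | n + 1 => by
    obtain ⟨w, hw, hvw⟩ := exists_hasWalk_of_forall_exists_adj hS hv n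
    obtain ⟨w', hw', hww'⟩ := hS w hw
    exact ⟨w', hw', hvw.append (hasWalk_one_of_adj hww')⟩

theorem IsLinConn.exists_adj_of_not_isTrivialComp {η : ℕ} {Vset : ℕ → Set V}
    (hD : D.IsLinConn η Vset) {i : ℕ} (hi1 : 1 ≤ i) (hiη : i ≤ η)
    (hnt : ¬ IsTrivialComp (Vset i)) {v : V} (hv : v ∈ Vset i) :
    ∃ w ∈ Vset i, D.Adj v w := by
  obtain ⟨w, hw, hwv⟩ : ∃ w ∈ Vset i, w ≠ v := by
    by_contra! h
    exact hnt ⟨v, Set.eq_singleton_iff_unique_mem.2 ⟨hv, h⟩⟩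
  obtain ⟨n, f, hf0, hfn, hfS, hf⟩ := hD.strong i hi1 hiη v hv w hw
  have hn : 0 < n := Nat.pos_of_ne_zero fun hn => hwv (by rw [← hfn, ← hf0, hn])
  exact ⟨f 1, hfS 1 hn, hf0 ▸ hf 0 hn⟩

theorem compGraph_adj_of_le {S : Set V} (hS : ∀ v ∈ S, ∃ w ∈ S, D.Adj v w)
    {x y z : V} (hxy : x ≠ y) {m m' : ℕ} (hmm' : m ≤ m') (hz : z ∈ S)
    (hwx : D.HasWalk m x z) (hwy : D.HasWalk m y z) : (D.compGraph m').Adj x y := by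
  obtain ⟨w, -, hzw⟩ := exists_hasWalk_of_forall_exists_adj hS hz (m' - m)
  rw [← Nat.add_sub_cancel' hmm']
  exact ⟨hxy, w, hwx.append hzw, hwy.append hzw⟩

end Digraph'

open Digraph' in
theorem stmt1_general {V : Type*} (D : Digraph' V) (η : ℕ) (Vset : ℕ → Set V)
    (hD : D.IsLinConn η Vset) (i : ℕ) (hi1 : 1 ≤ i) (hiη : i ≤ η)
    (hnt : ¬ IsTrivialComp (Vset i))
    (x y z : V) (hxy : x ≠ y) (m : ℕ) (hm : 1 ≤ m) (hz : z ∈ Vset i)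
    (hwx : D.HasWalk m x z) (hwy : D.HasWalk m y z) :
    ∃ N : ℕ, 1 ≤ N ∧ ∀ m', N ≤ m' → (D.compGraph m').Adj x y :=
  ⟨m, hm, fun _ hmm' => compGraph_adj_of_le
    (fun _ hv => hD.exists_adj_of_not_isTrivialComp hi1 hiη hnt hv) hxy hmm' hz hwx hwy⟩

open Digraph' in
/-- if distinct vertices `x` and `y` have a common `m`-step prey in a
nontrivial strong component then they are adjacent in `C(D^{m'})` for all `m' ≥ N`. -/
theorem stmt1 {V : Type*} [Fintype V] (D : Digraph' V) (η : ℕ) (Vset : ℕ → Set V)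
    (hD : D.IsLinConn η Vset) (i : ℕ) (hi1 : 1 ≤ i) (hiη : i ≤ η)
    (hnt : ¬ IsTrivialComp (Vset i))
    (x y z : V) (hxy : x ≠ y) (m : ℕ) (hm : 1 ≤ m) (hz : z ∈ Vset i)
    (hwx : D.HasWalk m x z) (hwy : D.HasWalk m y z) :
    ∃ N : ℕ, 1 ≤ N ∧ ∀ m', N ≤ m' → (D.compGraph m').Adj x y :=
  stmt1_general D η Vset hD i hi1 hiη hnt x y z hxy m hm hz hwx hwy
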